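/- arXiv:1808.00146 — 2 statements merged into one kernel-verified Lean document; each statement's English description precedes it below -/
import Mathlib

section
/- Let h, k be positive irrational real numbers with h + k = n a positive integer. Let P ⊂ ℝ² be the triangle with vertices (0,0), (-h,1), (k,1) (the pyramid over the segment [-h,k]×{1} with apex the origin). Then for every positive integer t, #(tP ∩ ℤ²) = (n/2)t² + (n/2)t + 1. -/
/-!
Row `j` of `tP` is the segment `[-hj, kj] × {j}`. For `j ≥ 1` the endpoint `hj` is irrational
while `hj + kj = nj` is an integer, so neither endpoint is a lattice point and the row contains
exactly `nj` lattice points; with the apex this gives `1 + n t (t + 1) / 2`.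
-/

open Pointwise

/-- The integer lattice ℤ² inside ℝ². -/
def latticeZ2 : Set (ℝ × ℝ) := {p | ∃ m n : ℤ, p = ((m : ℝ), (n : ℝ))}

lemma Irrational.floor_add_floor_of_add_eq_intCast {x y : ℝ} (hx : Irrational x) {m : ℤ}
    (hxy : x + y = m) : ⌊x⌋ + ⌊y⌋ = m - 1 := by
  have hceil : ⌈x⌉ = ⌊x⌋ + 1 :=
    (Int.ceil_eq_floor_add_one_iff_notMem x).mpr fun ⟨z, hz⟩ => hx.ne_int z hz.symm
  rw [show y = -x + m by linarith, Int.floor_add_intCast, Int.floor_neg, hceil]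
  ring

lemma Irrational.card_Icc_ceil_neg_mul_floor_mul {h k : ℝ} (hh : Irrational h) {n : ℕ}
    (hsum : h + k = n) {j : ℕ} (hj : j ≠ 0) : (Finset.Icc ⌈-h * j⌉ ⌊k * j⌋).card = n * j := by
  have hfloor := (hh.mul_natCast hj).floor_add_floor_of_add_eq_intCast (y := k * j) (m := n * j)
    (by push_cast; linear_combination (j : ℝ) * hsum)
  rw [Int.card_Icc, neg_mul, Int.ceil_neg,
    show ⌊k * j⌋ + 1 - -⌊h * j⌋ = ((n * j : ℕ) : ℤ) by push_cast; linarith, Int.toNat_natCast]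

lemma convexHull_triangle {a b t : ℝ} (hab : a ≤ b) (ht : 0 ≤ t) :
    convexHull ℝ {((0 : ℝ), (0 : ℝ)), (t * a, t), (t * b, t)} =
      {p : ℝ × ℝ | 0 ≤ p.2 ∧ p.2 ≤ t ∧ a * p.2 ≤ p.1 ∧ p.1 ≤ b * p.2} := by
  apply Set.Subset.antisymm
  · refine convexHull_min ?_ ?_
    · rintro q (rfl | rfl | rfl) <;> simp only [Set.mem_ofPred_eq] <;>
        refine ⟨?_, ?_, ?_, ?_⟩ <;> nlinarith
    · rintro p ⟨hp1, hp2, hp3, hp4⟩ q ⟨hq1, hq2, hq3, hq4⟩ μ ν hμ hν hμν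
      simp only [Set.mem_ofPred_eq, Prod.snd_add, Prod.fst_add, Prod.smul_snd, Prod.smul_fst,
        smul_eq_mul]
      refine ⟨?_, ?_, ?_, ?_⟩ <;> nlinarith
  · rintro ⟨x, y⟩ ⟨hy0, hyt, hax, hxb⟩
    rcases hy0.eq_or_lt with rfl | hy
    · obtain rfl : x = 0 := by simp only [mul_zero] at hax hxb; linarith
      exact subset_convexHull ℝ _ (Set.mem_insert _ _)
    have ht' : 0 < t := hy.trans_le hyt
    -- `(x, y)` lies on the segment from the apex to the point `(t * x / y, t)` of the base.
    have hbase : (t * x / y, t) ∈ convexHull ℝ {((0 : ℝ), (0 : ℝ)), (t * a, t), (t * b, t)} := by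
      refine convexHull_mono (Set.subset_insert _ _) (segment_subset_convexHull
        (Set.mem_insert _ _) (Set.mem_insert_of_mem _ (Set.mem_singleton _)) ?_)
      rw [← Prod.image_mk_segment_left, segment_eq_Icc (by nlinarith)]
      refine ⟨t * x / y, ⟨?_, ?_⟩, rfl⟩
      · rw [le_div_iff₀ hy]; nlinarith
      · rw [div_le_iff₀ hy]; nlinarith
    have hscale : (y / t) • (t * x / y, t) = (x, y) := by
      ext <;> simp only [Prod.smul_fst, Prod.smul_snd, smul_eq_mul] <;> field_simp
    rw [← hscale]
    exact (convex_convexHull ℝ _).smul_mem_of_zero_mem (subset_convexHull ℝ _ (Set.mem_insert _ _))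
      hbase ⟨div_nonneg hy0 ht'.le, (div_le_one ht').mpr hyt⟩

lemma smul_convexHull_triangle {a b t : ℝ} (hab : a ≤ b) (ht : 0 ≤ t) :
    t • convexHull ℝ {((0 : ℝ), (0 : ℝ)), (a, 1), (b, 1)} =
      {p : ℝ × ℝ | 0 ≤ p.2 ∧ p.2 ≤ t ∧ a * p.2 ≤ p.1 ∧ p.1 ≤ b * p.2} := by
  rw [← convexHull_smul, Set.smul_set_insert, Set.smul_set_insert, Set.smul_set_singleton]
  simp only [Prod.smul_mk, smul_eq_mul, mul_zero, mul_one]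
  exact convexHull_triangle hab ht

lemma ncard_inter_latticeZ2_eq_sum_card_Icc (a b : ℝ) (t : ℕ) :
    ({p : ℝ × ℝ | 0 ≤ p.2 ∧ p.2 ≤ t ∧ a * p.2 ≤ p.1 ∧ p.1 ≤ b * p.2} ∩ latticeZ2).ncard =
      ∑ j ∈ Finset.range (t + 1), (Finset.Icc ⌈a * j⌉ ⌊b * j⌋).card := by
  let rows : Finset ((_ : ℕ) × ℤ) :=
    (Finset.range (t + 1)).sigma fun j => Finset.Icc ⌈a * j⌉ ⌊b * j⌋
  let toPlane : (_ : ℕ) × ℤ → ℝ × ℝ := fun q => ((q.2 : ℝ), (q.1 : ℝ))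
  have hinj : Function.Injective toPlane := by
    rintro ⟨j, m⟩ ⟨j', m'⟩ h
    simp only [toPlane, Prod.mk.injEq, Int.cast_inj, Nat.cast_inj] at h
    obtain ⟨rfl, rfl⟩ := h
    rfl
  have hset : {p : ℝ × ℝ | 0 ≤ p.2 ∧ p.2 ≤ t ∧ a * p.2 ≤ p.1 ∧ p.1 ≤ b * p.2} ∩ latticeZ2 =
      ↑(rows.image toPlane) := by
    ext p
    simp only [Set.mem_inter_iff, Set.mem_ofPred_eq, latticeZ2, Finset.coe_image,
      Set.mem_image, Finset.mem_coe, rows, toPlane, Finset.mem_sigma, Finset.mem_range,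
      Finset.mem_Icc, Int.ceil_le, Int.le_floor, Sigma.exists]
    constructor
    · rintro ⟨⟨hl0, hlt, ham, hmb⟩, m, l, rfl⟩
      dsimp only at hl0 hlt ham hmb
      lift l to ℕ using (by exact_mod_cast hl0)
      push_cast at *
      exact ⟨l, m, ⟨Nat.lt_succ_of_le (by exact_mod_cast hlt), ham, hmb⟩, rfl⟩
    · rintro ⟨j, m, ⟨hj, ham, hmb⟩, rfl⟩
      exact ⟨⟨j.cast_nonneg, Nat.cast_le.mpr (Nat.le_of_lt_succ hj), ham, hmb⟩, m, j, by simp⟩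
  rw [hset, Set.ncard_coe_finset, Finset.card_image_of_injective _ hinj, Finset.card_sigma]

theorem stmt_3_general (h k : ℝ) (hh : Irrational h) (n : ℕ) (hsum : h + k = (n : ℝ))
    (P : Set (ℝ × ℝ))
    (hP : P = convexHull ℝ {((0 : ℝ), (0 : ℝ)), (-h, 1), (k, 1)})
    (t : ℕ) :
    ((((t : ℝ) • P) ∩ latticeZ2).ncard : ℝ) =
      ((n : ℝ) / 2) * t ^ 2 + ((n : ℝ) / 2) * t + 1 := by
  have hcount : ((t : ℝ) • P ∩ latticeZ2).ncard = ∑ j ∈ Finset.range t, n * (j + 1) + 1 := by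
    rw [hP, smul_convexHull_triangle (by linarith [n.cast_nonneg (α := ℝ)]) t.cast_nonneg,
      ncard_inter_latticeZ2_eq_sum_card_Icc, Finset.sum_range_succ',
      Finset.sum_congr rfl fun j _ => hh.card_Icc_ceil_neg_mul_floor_mul hsum j.succ_ne_zero]
    simp
  have hgauss : (∑ j ∈ Finset.range t, ((j : ℝ) + 1)) * 2 = (t + 1) * t := by
    have hnat : (∑ j ∈ Finset.range t, (j + 1)) * 2 = (t + 1) * t := by
      simpa [Finset.sum_range_succ'] using Finset.sum_range_id_mul_two (t + 1)
    exact_mod_cast hnat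
  rw [hcount, ← Finset.mul_sum]
  push_cast
  linear_combination (n : ℝ) / 2 * hgauss

theorem stmt_3 (h k : ℝ) (hh : Irrational h) (hk : Irrational k)
    (hhpos : 0 < h) (hkpos : 0 < k) (n : ℕ) (hn : 0 < n) (hsum : h + k = (n : ℝ))
    (P : Set (ℝ × ℝ))
    (hP : P = convexHull ℝ {((0 : ℝ), (0 : ℝ)), (-h, 1), (k, 1)})
    (t : ℕ) (ht : 0 < t) :
    ((((t : ℝ) • P) ∩ latticeZ2).ncard : ℝ) =
      ((n : ℝ) / 2) * t ^ 2 + ((n : ℝ) / 2) * t + 1 :=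
  stmt_3_general h k hh n hsum P hP t
end

section
/- Let h, k be positive irrational reals with 1/h + 1/k = 1 and h + k = β ∈ ℤ. Then for every positive integer t, the count #(tT ∩ ℤ²) for T = conv{(0,0),(h,0),(0,k)} equals (β/2)t² + (β/2)t + 1. -/
/-!
Since `1 / h + 1 / k = 1` we have `h k = h + k`, so `t T` is cut out of the first quadrant by
`k (x - t) + h (y - t) ≤ 0`: its hypotenuse passes through `(t, t)`. Its lattice points are the
union of those with `x ≤ t` and those with `y ≤ t`, which overlap in the square `[0, t]²`.
Column `x = t - i` of the first part has `t + 1 + ⌊i (k - 1)⌋` points and row `y = t - i` of the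
second has `t + 1 + ⌊i (h - 1)⌋` points, because `k / h = k - 1` and `h / k = h - 1`. As
`(k - 1) + (h - 1) = β - 2` is an integer and `i (k - 1)` is irrational,
`⌊i (k - 1)⌋ + ⌊i (h - 1)⌋ = i (β - 2) - 1` for `i ≥ 1`, and summing over `i ≤ t` gives the count.
-/

open Pointwise

open Finset

theorem Irrational.floor_add_floor_eq {x y : ℝ} {n : ℤ} (hx : Irrational x) (hxy : x + y = n) :
    ⌊x⌋ + ⌊y⌋ = n - 1 := by
  have hceil : ⌈x⌉ = ⌊x⌋ + 1 := by
    rw [Int.ceil_eq_floor_add_one_iff_notMem]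
    rintro ⟨m, rfl⟩
    exact hx.ne_int m rfl
  rw [eq_sub_of_add_eq' hxy, sub_eq_add_neg, Int.floor_intCast_add, Int.floor_neg, hceil]
  ring

theorem sum_range_natFloor_add_natFloor {a b : ℝ} {c : ℤ} (ha : Irrational a) (ha0 : 0 ≤ a)
    (hb0 : 0 ≤ b) (hab : a + b = c) (t : ℕ) :
    ∑ i ∈ range (t + 1), ((⌊i * a⌋₊ : ℝ) + ⌊i * b⌋₊) = c * (t * (t + 1) / 2) - t := by
  induction t with
  | zero => simp
  | succ t ih =>
    have hfloor : (⌊(t + 1 : ℕ) * a⌋₊ : ℝ) + ⌊(t + 1 : ℕ) * b⌋₊ = (t + 1) * c - 1 := by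
      rw [natCast_floor_eq_intCast_floor (by positivity),
        natCast_floor_eq_intCast_floor (by positivity)]
      exact_mod_cast (ha.natCast_mul t.succ_ne_zero).floor_add_floor_eq (n := (t + 1) * c)
        (by push_cast; rw [← hab]; ring)
    rw [sum_range_succ, ih, hfloor]
    push_cast
    ring

theorem convexHull_right_triangle {P Q : ℝ} (hP : 0 < P) (hQ : 0 < Q) :
    convexHull ℝ {((0 : ℝ), (0 : ℝ)), (P, 0), (0, Q)} =
      {x : ℝ × ℝ | 0 ≤ x.1 ∧ 0 ≤ x.2 ∧ Q * x.1 + P * x.2 ≤ P * Q} := by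
  apply subset_antisymm
  · refine convexHull_min ?_ ?_
    · rintro x (rfl | rfl | rfl) <;> simp [hP.le, hQ.le, mul_comm, mul_nonneg]
    · rintro x ⟨hx1, hx2, hx3⟩ y ⟨hy1, hy2, hy3⟩ a b ha hb hab
      simp only [Set.mem_ofPred_eq, Prod.fst_add, Prod.snd_add, Prod.smul_fst, Prod.smul_snd,
        smul_eq_mul]
      refine ⟨by positivity, by positivity, ?_⟩
      linear_combination mul_le_mul_of_nonneg_left hx3 ha + mul_le_mul_of_nonneg_left hy3 hb +
        P * Q * hab
  · rintro ⟨x, y⟩ ⟨hx, hy, hxy⟩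
    have hsum : x / P + y / Q ≤ 1 := by
      rw [div_add_div _ _ hP.ne' hQ.ne', div_le_one (by positivity)]
      linarith
    have hmem := (convex_convexHull ℝ ({((0 : ℝ), (0 : ℝ)), (P, 0), (0, Q)} : Set (ℝ × ℝ))).sum_mem
      (t := univ) (w := ![1 - x / P - y / Q, x / P, y / Q]) (z := ![(0, 0), (P, 0), (0, Q)])
      (by intro i _; fin_cases i <;> simp <;> first | linarith | positivity)
      (by simp [Fin.sum_univ_three]; ring)
      (by intro i _; apply subset_convexHull; fin_cases i <;> simp)
    convert hmem using 1
    simp [Fin.sum_univ_three, div_mul_cancel₀ _ hP.ne', div_mul_cancel₀ _ hQ.ne']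

theorem smul_convexHull_right_triangle {h k t : ℝ} (hh : 0 < h) (hk : 0 < k) (hmul : h * k = h + k)
    (ht : 0 < t) :
    t • convexHull ℝ {((0 : ℝ), (0 : ℝ)), (h, 0), (0, k)} =
      {x : ℝ × ℝ | 0 ≤ x.1 ∧ 0 ≤ x.2 ∧ k * (x.1 - t) + h * (x.2 - t) ≤ 0} := by
  rw [← convexHull_smul, Set.smul_set_insert, Set.smul_set_insert, Set.smul_set_singleton]
  simp only [Prod.smul_mk, smul_eq_mul, mul_zero]
  rw [convexHull_right_triangle (by positivity) (by positivity)]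
  ext x
  simp only [Set.mem_ofPred_eq]
  have hfactor : t * k * x.1 + t * h * x.2 - t * h * (t * k) =
      t * (k * (x.1 - t) + h * (x.2 - t)) := by linear_combination (-t ^ 2) * hmul
  refine and_congr_right' <| and_congr_right' ?_
  rw [← sub_nonpos, hfactor]
  exact ⟨(nonpos_of_mul_nonpos_right · ht), mul_nonpos_of_nonneg_of_nonpos ht.le⟩

def natPointsBelow (u v : ℝ) (t : ℕ) : Set (ℕ × ℕ) := {p | u * (p.1 - t) + v * (p.2 - t) ≤ 0}

theorem setOf_fst_le_snd_le_eq_biUnion (f : ℕ → ℕ) (t : ℕ) :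
    {p : ℕ × ℕ | p.1 ≤ t ∧ p.2 ≤ f p.1} =
      ↑((range (t + 1)).biUnion fun m => {m} ×ˢ range (f m + 1)) := by
  ext ⟨m, n⟩
  simp [and_comm]

theorem ncard_setOf_fst_le_snd_le (f : ℕ → ℕ) (t : ℕ) :
    {p : ℕ × ℕ | p.1 ≤ t ∧ p.2 ≤ f p.1}.ncard = ∑ m ∈ range (t + 1), (f m + 1) := by
  rw [setOf_fst_le_snd_le_eq_biUnion, Set.ncard_coe_finset, card_biUnion]
  · simp
  · intro m _ m' _ hmm'
    exact disjoint_product.mpr (Or.inl (disjoint_singleton.mpr hmm'))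

theorem natPointsBelow_fst_le_eq {u v : ℝ} (hu : 0 ≤ u) (hv : 0 < v) (t : ℕ) :
    {p ∈ natPointsBelow u v t | p.1 ≤ t} =
      {p : ℕ × ℕ | p.1 ≤ t ∧ p.2 ≤ t + ⌊((t - p.1 : ℕ) : ℝ) * (u / v)⌋₊} := by
  ext ⟨m, n⟩
  simp only [natPointsBelow, Set.mem_ofPred_eq]
  rw [and_comm]
  refine and_congr_right fun hm => ?_
  rw [add_comm t, ← Nat.floor_add_natCast (by positivity), Nat.le_floor_iff (by positivity),
    Nat.cast_sub hm, mul_div_assoc', div_add' _ _ _ hv.ne', le_div_iff₀ hv]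
  constructor <;> intro h <;> linarith

theorem natPointsBelow_fst_le_finite {u v : ℝ} (hu : 0 ≤ u) (hv : 0 < v) (t : ℕ) :
    {p ∈ natPointsBelow u v t | p.1 ≤ t}.Finite := by
  rw [natPointsBelow_fst_le_eq hu hv,
    setOf_fst_le_snd_le_eq_biUnion (fun m => t + ⌊((t - m : ℕ) : ℝ) * (u / v)⌋₊)]
  exact Finset.finite_toSet _

theorem ncard_natPointsBelow_fst_le {u v : ℝ} (hu : 0 ≤ u) (hv : 0 < v) (t : ℕ) :
    {p ∈ natPointsBelow u v t | p.1 ≤ t}.ncard = ∑ i ∈ range (t + 1), (t + 1 + ⌊i * (u / v)⌋₊) := by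
  rw [natPointsBelow_fst_le_eq hu hv,
    ncard_setOf_fst_le_snd_le (fun m => t + ⌊((t - m : ℕ) : ℝ) * (u / v)⌋₊), ← sum_range_reflect]
  refine sum_congr rfl fun i hi => ?_
  rw [show t - (t + 1 - 1 - i) = i by have := mem_range.mp hi; omega]
  ring

theorem natPointsBelow_snd_le_eq_preimage_swap (u v : ℝ) (t : ℕ) :
    {p ∈ natPointsBelow u v t | p.2 ≤ t} = Prod.swap ⁻¹' {p ∈ natPointsBelow v u t | p.1 ≤ t} := by
  ext p
  simp [natPointsBelow, add_comm]

theorem natPointsBelow_eq_union {u v : ℝ} (hu : 0 < u) (hv : 0 < v) (t : ℕ) :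
    natPointsBelow u v t =
      {p ∈ natPointsBelow u v t | p.1 ≤ t} ∪ {p ∈ natPointsBelow u v t | p.2 ≤ t} := by
  ext ⟨m, n⟩
  simp only [natPointsBelow, Set.mem_union, Set.mem_ofPred_eq, ← and_or_left, iff_self_and]
  intro h
  by_contra! hmn
  have hm : (t : ℝ) < m := by exact_mod_cast hmn.1
  have hn : (t : ℝ) < n := by exact_mod_cast hmn.2
  nlinarith

theorem natPointsBelow_fst_le_inter_snd_le {u v : ℝ} (hu : 0 ≤ u) (hv : 0 ≤ v) (t : ℕ) :
    {p ∈ natPointsBelow u v t | p.1 ≤ t} ∩ {p ∈ natPointsBelow u v t | p.2 ≤ t} =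
      {p : ℕ × ℕ | p.1 ≤ t ∧ p.2 ≤ t} := by
  ext ⟨m, n⟩
  simp only [natPointsBelow, Set.mem_inter_iff, Set.mem_ofPred_eq]
  constructor
  · rintro ⟨⟨_, hm⟩, _, hn⟩
    exact ⟨hm, hn⟩
  · rintro ⟨hm, hn⟩
    have hm' : (m : ℝ) ≤ t := by exact_mod_cast hm
    have hn' : (n : ℝ) ≤ t := by exact_mod_cast hn
    have : u * (m - t) + v * (n - t) ≤ 0 := by nlinarith
    exact ⟨⟨this, hm⟩, this, hn⟩

theorem ncard_natPointsBelow_add_sq {u v : ℝ} (hu : 0 < u) (hv : 0 < v) (t : ℕ) :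
    (natPointsBelow u v t).ncard + (t + 1) ^ 2 =
      ∑ i ∈ range (t + 1), (t + 1 + ⌊i * (u / v)⌋₊) +
        ∑ i ∈ range (t + 1), (t + 1 + ⌊i * (v / u)⌋₊) := by
  have hbox : {p : ℕ × ℕ | p.1 ≤ t ∧ p.2 ≤ t}.ncard = (t + 1) ^ 2 := by
    rw [ncard_setOf_fst_le_snd_le (fun _ => t)]
    simp [sq]
  have hfin₁ := natPointsBelow_fst_le_finite hu.le hv t
  have hfin₂ : {p ∈ natPointsBelow u v t | p.2 ≤ t}.Finite := by
    rw [natPointsBelow_snd_le_eq_preimage_swap]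
    exact (natPointsBelow_fst_le_finite hv.le hu t).preimage Prod.swap_injective.injOn
  have key := Set.ncard_union_add_ncard_inter _ _ hfin₁ hfin₂
  rwa [← natPointsBelow_eq_union hu hv, natPointsBelow_fst_le_inter_snd_le hu.le hv.le, hbox,
    ncard_natPointsBelow_fst_le hu.le hv, natPointsBelow_snd_le_eq_preimage_swap,
    ← Set.image_swap_eq_preimage_swap, Set.ncard_image_of_injective _ Prod.swap_injective,
    ncard_natPointsBelow_fst_le hv.le hu] at key

theorem ncard_inter_latticeZ2 {s : Set (ℝ × ℝ)} (hs : ∀ x ∈ s, 0 ≤ x.1 ∧ 0 ≤ x.2) :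
    (s ∩ latticeZ2).ncard = {p : ℕ × ℕ | ((p.1 : ℝ), (p.2 : ℝ)) ∈ s}.ncard := by
  have hinj : Function.Injective fun p : ℕ × ℕ => ((p.1 : ℝ), (p.2 : ℝ)) := by
    rintro ⟨m, n⟩ ⟨m', n'⟩ h
    simpa using h
  rw [← Set.ncard_image_of_injective _ hinj]
  congr 1
  ext x
  constructor
  · rintro ⟨hx, m, n, rfl⟩
    obtain ⟨hm, hn⟩ : (0 : ℝ) ≤ m ∧ (0 : ℝ) ≤ n := hs _ hx
    lift m to ℕ using by exact_mod_cast hm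
    lift n to ℕ using by exact_mod_cast hn
    exact ⟨(m, n), by simpa using hx, by simp⟩
  · rintro ⟨p, hp, rfl⟩
    exact ⟨hp, p.1, p.2, rfl⟩

theorem stmt_9_general (h k : ℝ) (hk : Irrational k)
    (hhpos : 0 < h) (hkpos : 0 < k) (hhk : 1 / h + 1 / k = 1)
    (β : ℤ) (hβ : h + k = (β : ℝ))
    (T : Set (ℝ × ℝ))
    (hT : T = convexHull ℝ {((0 : ℝ), (0 : ℝ)), (h, 0), (0, k)})
    (t : ℕ) (ht : 0 < t) :
    ((((t : ℝ) • T) ∩ latticeZ2).ncard : ℝ) =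
      ((β : ℝ) / 2) * t ^ 2 + ((β : ℝ) / 2) * t + 1 := by
  have hmul : h * k = h + k := by field_simp at hhk; linarith
  have hkh : k / h = k - 1 := by field_simp; linarith
  have hhk' : h / k = h - 1 := by field_simp; linarith
  have hcount : (((t : ℝ) • T) ∩ latticeZ2).ncard = (natPointsBelow k h t).ncard := by
    rw [hT, smul_convexHull_right_triangle hhpos hkpos hmul (by exact_mod_cast ht),
      ncard_inter_latticeZ2 fun x hx => ⟨hx.1, hx.2.1⟩]
    simp [natPointsBelow]
  have hsum := congrArg (Nat.cast : ℕ → ℝ) (ncard_natPointsBelow_add_sq hkpos hhpos t)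
  have hfloors := sum_range_natFloor_add_natFloor (c := β - 2)
    (by rw [hkh]; exact_mod_cast hk.sub_intCast 1) (div_pos hkpos hhpos).le
    (div_pos hhpos hkpos).le (by push_cast; rw [hkh, hhk']; linarith) t
  simp only [sum_add_distrib, sum_const, card_range, nsmul_eq_mul] at hsum hfloors
  push_cast at hsum hfloors
  rw [hcount]
  linear_combination hsum + hfloors

theorem stmt_9 (h k : ℝ) (hh : Irrational h) (hk : Irrational k)
    (hhpos : 0 < h) (hkpos : 0 < k) (hhk : 1 / h + 1 / k = 1)
    (β : ℤ) (hβ : h + k = (β : ℝ))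
    (T : Set (ℝ × ℝ))
    (hT : T = convexHull ℝ {((0 : ℝ), (0 : ℝ)), (h, 0), (0, k)})
    (t : ℕ) (ht : 0 < t) :
    ((((t : ℝ) • T) ∩ latticeZ2).ncard : ℝ) =
      ((β : ℝ) / 2) * t ^ 2 + ((β : ℝ) / 2) * t + 1 :=
  stmt_9_general h k hk hhpos hkpos hhk β hβ T hT t ht
end
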